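/- Let N > 2 be an integer, 1 < p < N, and k < (N-p)/(1-p) (so that k·(k - (N-p)/(1-p)) > 0). Set c = √(k·(k - (N-p)/(1-p))). Let 0 < b ≤ π/2 and suppose H : [0, b) → ℝ is differentiable with H(0) = 0, satisfies the H-equation on (0, b), and H(x) ≤ 0 and H'(x) < 0 for all x ∈ (0, b). Then for every x ∈ [0, b) with p·c·x < π/2, one has H(x) ≥ -c·tan(p·c·x). -/

import Mathlib

/-!
The H-equation, together with `H ≤ 0`, `cot ≥ 0` and `c² = k(k - (N-p)/(1-p))`, yields the
Riccati inequality `H' ≥ -p (H² + c²)`. Its comparison solution is `-c·tan(p c x)`: the function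
`arctan (H / c) + p c x` is nondecreasing, hence nonnegative, and applying `tan` gives the bound.
-/

noncomputable section
open Real Set Filter Topology

/-- `H` satisfies the first-order H-equation (for parameters `p`, `N`, `k`) on the set `I`:
`((p-1)H² + k²)H' = (1-p)(H² + k²)² + (H² + k²)(k(p-N) + (2-N)·H·cot x)`. -/
def HEqOn (p : ℝ) (N : ℕ) (k : ℝ) (H : ℝ → ℝ) (I : Set ℝ) : Prop :=
  ∀ x ∈ I,
    ((p - 1) * (H x) ^ 2 + k ^ 2) * deriv H x =
      (1 - p) * ((H x) ^ 2 + k ^ 2) ^ 2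
        + ((H x) ^ 2 + k ^ 2) * (k * (p - (N : ℝ)) + (2 - (N : ℝ)) * H x * Real.cot x)

lemma Real.cot_nonneg_of_mem_Ioc {x : ℝ} (hx : x ∈ Ioc 0 (π / 2)) : 0 ≤ cot x := by
  rw [cot_eq_cos_div_sin]
  exact div_nonneg (cos_nonneg_of_mem_Icc ⟨by linarith [pi_pos, hx.1], hx.2⟩)
    (sin_pos_of_pos_of_lt_pi hx.1 (by linarith [pi_pos, hx.2])).le

lemma neg_mul_tan_le_of_neg_le_arctan_div {θ c h : ℝ} (hθ : θ ∈ Ico 0 (π / 2)) (hc : 0 < c)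
    (hle : -θ ≤ arctan (h / c)) : -c * tan θ ≤ h := by
  have hmem : -θ ∈ Ioo (-(π / 2)) (π / 2) :=
    ⟨by linarith [hθ.2], by linarith [hθ.1, pi_pos]⟩
  rw [← arctan_tan hmem.1 hmem.2, arctan_le_arctan_iff, tan_neg, le_div_iff₀ hc] at hle
  linarith

theorem neg_mul_tan_le_of_neg_mul_sq_add_sq_le_deriv {H : ℝ → ℝ} {a c x : ℝ} (ha : 0 ≤ a)
    (hc : 0 < c) (hx : 0 ≤ x) (hacx : a * c * x < π / 2) (hH0 : 0 ≤ H 0)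
    (hcont : ContinuousOn H (Icc 0 x)) (hdiff : ∀ y ∈ Ioo 0 x, DifferentiableAt ℝ H y)
    (hderiv : ∀ y ∈ Ioo 0 x, -(a * (H y ^ 2 + c ^ 2)) ≤ deriv H y) :
    -c * tan (a * c * x) ≤ H x := by
  set g : ℝ → ℝ := fun y => arctan (H y / c) + a * c * y
  have hg_deriv : ∀ y ∈ Ioo 0 x,
      HasDerivAt g (1 / (1 + (H y / c) ^ 2) * (deriv H y / c) + a * c) y := fun y hy =>
    ((hdiff y hy).hasDerivAt.div_const c).arctan.add
      (by simpa using (hasDerivAt_id y).const_mul (a * c))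
  have hg_mono : MonotoneOn g (Icc 0 x) := by
    refine monotoneOn_of_deriv_nonneg (convex_Icc 0 x) ?_ ?_ ?_
    · exact (continuous_arctan.comp_continuousOn (hcont.div_const c)).add (by fun_prop)
    · rw [interior_Icc]
      exact fun y hy => (hg_deriv y hy).differentiableAt.differentiableWithinAt
    · rw [interior_Icc]
      intro y hy
      have hg_deriv_eq : 1 / (1 + (H y / c) ^ 2) * (deriv H y / c) + a * c
          = c * (deriv H y + a * (H y ^ 2 + c ^ 2)) / (H y ^ 2 + c ^ 2) := by
        field_simp
        ring
      rw [(hg_deriv y hy).deriv, hg_deriv_eq]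
      have := hderiv y hy
      exact div_nonneg (mul_nonneg hc.le (by linarith)) (by positivity)
  have hg : g 0 ≤ g x := hg_mono ⟨le_rfl, hx⟩ ⟨hx, le_rfl⟩ hx
  have harctan0 : 0 ≤ arctan (H 0 / c) := arctan_nonneg.mpr (div_nonneg hH0 hc.le)
  refine neg_mul_tan_le_of_neg_le_arctan_div ⟨by positivity, hacx⟩ hc ?_
  simp only [g, mul_zero, add_zero] at hg
  linarith

/-- `h`, `d`, `t` stand for `H x`, `deriv H x`, `cot x`. -/
theorem neg_mul_sq_add_sq_le_of_HEq {p N k c h d t : ℝ} (hp : 1 < p) (hN : 2 ≤ N) (hk : k ≠ 0)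
    (hc : c ^ 2 = k * (k - (N - p) / (1 - p))) (hh : h ≤ 0) (ht : 0 ≤ t)
    (heq : ((p - 1) * h ^ 2 + k ^ 2) * d
      = (1 - p) * (h ^ 2 + k ^ 2) ^ 2 + (h ^ 2 + k ^ 2) * (k * (p - N) + (2 - N) * h * t)) :
    -(p * (h ^ 2 + c ^ 2)) ≤ d := by
  have hkc : k * (p - N) = (p - 1) * (k ^ 2 - c ^ 2) := by
    rw [hc]
    field_simp [show (1 : ℝ) - p ≠ 0 by linarith]
    ring
  have hD : 0 < (p - 1) * h ^ 2 + k ^ 2 := by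
    have := mul_nonneg (sub_pos.mpr hp).le (sq_nonneg h)
    positivity
  have hcot_term : 0 ≤ (h ^ 2 + k ^ 2) * ((2 - N) * h * t) :=
    mul_nonneg (by positivity) (mul_nonneg (mul_nonneg_of_nonpos_of_nonpos (by linarith) hh) ht)
  have hsplit : (1 - p) * (h ^ 2 + k ^ 2) ^ 2 + (h ^ 2 + k ^ 2) * ((p - 1) * (k ^ 2 - c ^ 2))
      = -(p * (h ^ 2 + c ^ 2)) * ((p - 1) * h ^ 2 + k ^ 2)
        + (h ^ 2 + c ^ 2) * ((p - 1) ^ 2 * h ^ 2 + k ^ 2) := by ring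
  have hrest : 0 ≤ (h ^ 2 + c ^ 2) * ((p - 1) ^ 2 * h ^ 2 + k ^ 2) := by positivity
  refine le_of_mul_le_mul_right ?_ hD
  rw [hkc, mul_add] at heq
  linarith

theorem H_tangent_lower_bound_general (N : ℕ) (hN : 2 < N) (p : ℝ) (hp1 : 1 < p)
    (hpN : p < (N : ℝ)) (k : ℝ) (hk : k < ((N : ℝ) - p) / (1 - p))
    (b : ℝ) (hb : b ≤ π / 2)
    (H : ℝ → ℝ)
    (hd : ∀ x ∈ Ico (0 : ℝ) b, DifferentiableWithinAt ℝ H (Ici 0) x)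
    (hH0 : H 0 = 0)
    (heq : HEqOn p N k H (Ioo 0 b))
    (hneg : ∀ x ∈ Ioo (0 : ℝ) b, H x ≤ 0 ∧ deriv H x < 0) :
    ∀ x ∈ Ico (0 : ℝ) b,
      p * Real.sqrt (k * (k - ((N : ℝ) - p) / (1 - p))) * x < π / 2 →
      -Real.sqrt (k * (k - ((N : ℝ) - p) / (1 - p))) *
          Real.tan (p * Real.sqrt (k * (k - ((N : ℝ) - p) / (1 - p))) * x) ≤ H x := by
  intro x hx hpcx
  have hm : ((N : ℝ) - p) / (1 - p) < 0 := div_neg_of_pos_of_neg (by linarith) (by linarith)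
  have hk0 : k < 0 := hk.trans hm
  have hc2 : 0 < k * (k - ((N : ℝ) - p) / (1 - p)) := mul_pos_of_neg_of_neg hk0 (by linarith)
  have hIoo : ∀ y ∈ Ioo 0 x, y ∈ Ioo 0 b := fun y hy => ⟨hy.1, hy.2.trans hx.2⟩
  refine neg_mul_tan_le_of_neg_mul_sq_add_sq_le_deriv (by linarith) (sqrt_pos.mpr hc2) hx.1 hpcx
    hH0.ge ?_ ?_ ?_
  · exact fun y hy =>
      (hd y ⟨hy.1, hy.2.trans_lt hx.2⟩).continuousWithinAt.mono Icc_subset_Ici_self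
  · exact fun y hy => (hd y ⟨hy.1.le, (hIoo y hy).2⟩).differentiableAt (Ici_mem_nhds hy.1)
  · intro y hy
    exact neg_mul_sq_add_sq_le_of_HEq hp1 (by exact_mod_cast hN.le) hk0.ne (sq_sqrt hc2.le)
      (hneg y (hIoo y hy)).1 (cot_nonneg_of_mem_Ioc ⟨hy.1, (hIoo y hy).2.le.trans hb⟩)
      (heq y (hIoo y hy))

/-- Lower tangent bound: with `c = √(k(k - (N-p)/(1-p)))`, a nonpositive decreasing
solution of the H-equation with `H(0)=0` satisfies `H(x) ≥ -c·tan(p·c·x)` as long as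
`p·c·x < π/2`. -/
theorem H_tangent_lower_bound (N : ℕ) (hN : 2 < N) (p : ℝ) (hp1 : 1 < p)
    (hpN : p < (N : ℝ)) (k : ℝ) (hk : k < ((N : ℝ) - p) / (1 - p))
    (b : ℝ) (hb0 : 0 < b) (hb : b ≤ π / 2)
    (H : ℝ → ℝ)
    (hd : ∀ x ∈ Ico (0 : ℝ) b, DifferentiableWithinAt ℝ H (Ici 0) x)
    (hH0 : H 0 = 0)
    (heq : HEqOn p N k H (Ioo 0 b))
    (hneg : ∀ x ∈ Ioo (0 : ℝ) b, H x ≤ 0 ∧ deriv H x < 0) :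
    ∀ x ∈ Ico (0 : ℝ) b,
      p * Real.sqrt (k * (k - ((N : ℝ) - p) / (1 - p))) * x < π / 2 →
      -Real.sqrt (k * (k - ((N : ℝ) - p) / (1 - p))) *
          Real.tan (p * Real.sqrt (k * (k - ((N : ℝ) - p) / (1 - p))) * x) ≤ H x :=
  H_tangent_lower_bound_general N hN p hp1 hpN k hk b hb H hd hH0 heq hneg
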